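/- arXiv:2209.13695 — 2 statements merged into one kernel-verified Lean document; each statement's English description precedes it below -/
import Mathlib

section
/- A symmetric Dyck path μ of semilength 2n lies in the image of the upward pop operator on J(Φ⁺_{B_n}) if and only if μ contains no four consecutive steps fall-fall-rise-rise and the only lattice points of μ on the x-axis are its endpoints (0,0) and (4n,0). -/
/-- `h : ℕ → ℤ` is the height function of a Dyck path of semilength `m`:
it starts at 0, stays nonnegative, moves by `±1` at each of the `2m` steps,
and is 0 from position `2m` on. -/
def IsDyckHeight (m : ℕ) (h : ℕ → ℤ) : Prop :=
  h 0 = 0 ∧ (∀ i, 2 * m ≤ i → h i = 0) ∧ (∀ i, 0 ≤ h i) ∧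
    ∀ i < 2 * m, h (i + 1) - h i = 1 ∨ h (i + 1) - h i = -1

/-- Dyck paths of semilength `m`, ordered pointwise by their height functions. -/
abbrev DyckPath (m : ℕ) := {h : ℕ → ℤ // IsDyckHeight m h}

/-- Dyck paths of semilength `2n` symmetric about the vertical line `x = 2n`, ordered
pointwise. This poset is isomorphic to the lattice `J(Φ⁺_{B_n})`. -/
abbrev SymDyckPath (n : ℕ) := {μ : DyckPath (2 * n) // ∀ i ≤ 4 * n, μ.val (4 * n - i) = μ.val i}

/-- The path has no four consecutive steps fall-fall-rise-rise. -/
def NoFFRR (m : ℕ) (h : ℕ → ℤ) : Prop :=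
  ¬ ∃ i, i + 4 ≤ 2 * m ∧ h (i + 1) = h i - 1 ∧ h (i + 2) = h (i + 1) - 1 ∧
      h (i + 3) = h (i + 2) + 1 ∧ h (i + 4) = h (i + 3) + 1

/-- The only lattice points of the path on the x-axis are its two endpoints. -/
def OnlyEndpointsOnAxis (m : ℕ) (h : ℕ → ℤ) : Prop :=
  ∀ i, 0 < i → i < 2 * m → 0 < h i

/-
The covers of a symmetric Dyck path `ν` are obtained by raising a mirror pair `{i, 4n - i}` of
valleys of `ν` by 2, and every `z > ν` lies above such a raise (take for `i` a lowest point
where `ν < z`). Hence the join of `ν` and its covers is `Pop ν`, the path obtained by raising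
all valleys of `ν`. Raising turns the valleys of `ν` into peaks, so `μ = Pop ν` forces `ν` to
be `μ` with all peaks lowered. Interior zeros of `ν` are valleys, so `Pop ν` meets the axis only
at its endpoints, and for such `μ` lowering the peaks keeps the path nonnegative. Every valley of
`Pop ν` is next to a raised point, hence to a peak; this is exactly the absence of `ffrr`, and
it is what makes the valleys of the lowered path coincide with the peaks of `μ`.
-/

section DyckHeight

variable {m i : ℕ} {f g : ℕ → ℤ}

theorem IsDyckHeight.nonneg (hg : IsDyckHeight m g) (i : ℕ) : 0 ≤ g i := hg.2.2.1 i

theorem IsDyckHeight.eq_zero (hg : IsDyckHeight m g) (hi : 2 * m ≤ i) : g i = 0 := hg.2.1 i hi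

theorem IsDyckHeight.step (hg : IsDyckHeight m g) (hi : i < 2 * m) :
    g (i + 1) = g i + 1 ∨ g (i + 1) = g i - 1 := by
  have := hg.2.2.2 i hi
  omega

theorem IsDyckHeight.step_pred (hg : IsDyckHeight m g) (h0 : 0 < i) (hi : i ≤ 2 * m) :
    g (i - 1) = g i - 1 ∨ g (i - 1) = g i + 1 := by
  have := hg.step (i := i - 1) (by omega)
  rw [Nat.sub_add_cancel h0] at this
  omega

theorem IsDyckHeight.two_dvd_add (hg : IsDyckHeight m g) : ∀ i ≤ 2 * m, (2 : ℤ) ∣ g i + i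
  | 0, _ => by simp [hg.1]
  | i + 1, hi => by
    have := hg.two_dvd_add i (by omega)
    rcases hg.step (i := i) (by omega) with h | h <;> push_cast <;> omega

theorem IsDyckHeight.add_two_le_of_lt (hg : IsDyckHeight m g) (hf : IsDyckHeight m f)
    (hlt : g i < f i) : g i + 2 ≤ f i := by
  rcases le_or_gt i (2 * m) with hi | hi
  · have := hg.two_dvd_add i hi
    have := hf.two_dvd_add i hi
    omega
  · have := hg.eq_zero hi.le
    have := hf.eq_zero hi.le
    omega

end DyckHeight

-- `0 < i` excludes position 0, where the truncated `i - 1` is `0` again.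
def IsValley (g : ℕ → ℤ) (i : ℕ) : Prop :=
  0 < i ∧ g (i - 1) = g i + 1 ∧ g (i + 1) = g i + 1

def IsPeak (f : ℕ → ℤ) (i : ℕ) : Prop :=
  0 < i ∧ f (i - 1) = f i - 1 ∧ f (i + 1) = f i - 1

def IsSymmAbout (N : ℕ) (g : ℕ → ℤ) : Prop :=
  ∀ i ≤ N, g (N - i) = g i

section Extrema

variable {m N i : ℕ} {f g : ℕ → ℤ}

theorem IsValley.not_succ (h : IsValley g i) : ¬IsValley g (i + 1) := by
  rintro ⟨-, h', -⟩
  have := h.2.2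
  simp only [add_tsub_cancel_right] at h'
  omega

theorem IsValley.not_pred (h : IsValley g i) : ¬IsValley g (i - 1) := fun h' =>
  h'.not_succ (by rwa [Nat.sub_add_cancel h.1])

theorem IsPeak.not_succ (h : IsPeak f i) : ¬IsPeak f (i + 1) := by
  rintro ⟨-, h', -⟩
  have := h.2.2
  simp only [add_tsub_cancel_right] at h'
  omega

theorem IsPeak.not_pred (h : IsPeak f i) : ¬IsPeak f (i - 1) := fun h' =>
  h'.not_succ (by rwa [Nat.sub_add_cancel h.1])

theorem IsValley.not_isPeak (h : IsValley g i) : ¬IsPeak g i := fun h' => by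
  have := h.2.2
  have := h'.2.2
  omega

theorem IsValley.lt (hg : IsDyckHeight m g) (h : IsValley g i) : i < 2 * m := by
  by_contra hi
  have := hg.eq_zero (i := i) (by omega)
  have := hg.eq_zero (i := i + 1) (by omega)
  have := h.2.2
  omega

theorem IsPeak.lt (hf : IsDyckHeight m f) (h : IsPeak f i) : i < 2 * m := by
  by_contra hi
  have := hf.eq_zero (i := i) (by omega)
  have := hf.eq_zero (i := i + 1) (by omega)
  have := h.2.2
  omega

theorem IsSymmAbout.apply_sub_sub_one (hg : IsSymmAbout N g) (hi : i < N) :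
    g (N - i - 1) = g (i + 1) := by
  rw [show N - i - 1 = N - (i + 1) by omega, hg _ (by omega)]

theorem IsSymmAbout.apply_sub_add_one (hg : IsSymmAbout N g) (hi : i ≤ N) (h0 : 0 < i) :
    g (N - i + 1) = g (i - 1) := by
  rw [show N - i + 1 = N - (i - 1) by omega, hg _ (by omega)]

theorem IsValley.mirror (hg : IsSymmAbout N g) (h : IsValley g i) (hi : i < N) :
    IsValley g (N - i) := by
  obtain ⟨h0, hl, hr⟩ := h
  refine ⟨by omega, ?_, ?_⟩
  · rw [hg.apply_sub_sub_one hi, hg i hi.le, hr]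
  · rw [hg.apply_sub_add_one hi.le h0, hg i hi.le, hl]

theorem IsPeak.mirror (hf : IsSymmAbout N f) (h : IsPeak f i) (hi : i < N) :
    IsPeak f (N - i) := by
  obtain ⟨h0, hl, hr⟩ := h
  refine ⟨by omega, ?_, ?_⟩
  · rw [hf.apply_sub_sub_one hi, hf i hi.le, hr]
  · rw [hf.apply_sub_add_one hi.le h0, hf i hi.le, hl]

theorem IsPeak.two_le (hf : IsDyckHeight m f) (hm : m ≠ 1) (hax : OnlyEndpointsOnAxis m f)
    (h : IsPeak f i) : 2 ≤ f i := by
  have hi := h.lt hf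
  obtain ⟨h0, hl, hr⟩ := h
  have := hf.nonneg (i - 1)
  have := hf.nonneg (i + 1)
  by_contra hlt
  rcases Nat.lt_or_ge 1 i with h1 | h1
  · have := hax (i - 1) (by omega) (by omega)
    omega
  · have := hax (i + 1) (by omega) (by omega)
    omega

theorem noFFRR_iff (hf : IsDyckHeight m f) :
    NoFFRR m f ↔ ∀ j, IsValley f j → IsPeak f (j - 1) ∨ IsPeak f (j + 1) := by
  constructor
  · intro hno j hv
    by_contra! hne
    have hj := hv.lt hf
    obtain ⟨h0, hl, hr⟩ := hv
    obtain ⟨k, rfl⟩ : ∃ k, j = k + 2 := ⟨j - 2, by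
      have := hf.nonneg j
      rcases Nat.lt_or_ge 1 j with h | h
      · omega
      · obtain rfl : j = 1 := by omega
        simp only [Nat.sub_self, hf.1] at hl
        omega⟩
    simp only [IsPeak, show k + 2 - 1 = k + 1 by omega, show k + 3 - 1 = k + 2 by omega,
      add_tsub_cancel_right, Nat.add_assoc, Nat.reduceAdd] at hne hl hr
    have hk : k + 4 ≤ 2 * m := by
      by_contra
      have := hf.eq_zero (i := k + 3) (by omega)
      have := hf.nonneg (k + 2)
      omega
    have := hf.step (i := k) (by omega)
    have := hf.step (i := k + 3) (by omega)
    simp only [Nat.add_assoc, Nat.reduceAdd] at this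
    exact hno ⟨k, hk, by omega, by omega, by omega, by omega⟩
  · rintro hadj ⟨k, -, h1, h2, h3, h4⟩
    have hv : IsValley f (k + 2) :=
      ⟨by omega, by simp only [show k + 2 - 1 = k + 1 by omega]; omega, by omega⟩
    have := hadj (k + 2) hv
    simp only [IsPeak, show k + 2 - 1 = k + 1 by omega, add_tsub_cancel_right, Nat.add_assoc,
      Nat.reduceAdd] at this
    omega

end Extrema

open Classical in
noncomputable def raiseOn (S : Set ℕ) (g : ℕ → ℤ) (j : ℕ) : ℤ :=
  if j ∈ S then g j + 2 else g j

noncomputable def raiseValleys (g : ℕ → ℤ) : ℕ → ℤ :=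
  raiseOn {j | IsValley g j} g

open Classical in
noncomputable def lowerPeaks (f : ℕ → ℤ) (j : ℕ) : ℤ :=
  if IsPeak f j then f j - 2 else f j

section Raising

variable {m N i : ℕ} {S T : Set ℕ} {f g : ℕ → ℤ}

theorem raiseOn_of_mem (h : i ∈ S) : raiseOn S g i = g i + 2 := if_pos h

theorem raiseOn_of_notMem (h : i ∉ S) : raiseOn S g i = g i := if_neg h

theorem le_raiseOn (S : Set ℕ) (g : ℕ → ℤ) (i : ℕ) : g i ≤ raiseOn S g i := by
  unfold raiseOn
  split_ifs <;> omega

theorem raiseOn_mono (hST : S ⊆ T) (i : ℕ) : raiseOn S g i ≤ raiseOn T g i := by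
  unfold raiseOn
  split_ifs with hS hT <;> first | omega | exact absurd (hST hS) hT

theorem isDyckHeight_raiseOn (hg : IsDyckHeight m g) (hS : ∀ j ∈ S, IsValley g j) :
    IsDyckHeight m (raiseOn S g) := by
  refine ⟨?_, fun i hi => ?_, fun i => (hg.nonneg i).trans (le_raiseOn S g i), fun i hi => ?_⟩
  · rw [raiseOn_of_notMem fun h => (hS 0 h).1.false, hg.1]
  · rw [raiseOn_of_notMem fun h => absurd ((hS i h).lt hg) (by omega), hg.eq_zero hi]
  · have := hg.2.2.2 i hi
    by_cases h1 : i ∈ S <;> by_cases h2 : i + 1 ∈ S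
    · exact absurd (hS _ h2) (hS _ h1).not_succ
    · have := (hS _ h1).2.2
      rw [raiseOn_of_mem h1, raiseOn_of_notMem h2]
      omega
    · have := (hS _ h2).2.1
      rw [add_tsub_cancel_right] at this
      rw [raiseOn_of_notMem h1, raiseOn_of_mem h2]
      omega
    · rwa [raiseOn_of_notMem h1, raiseOn_of_notMem h2]

theorem isSymmAbout_raiseOn (hg : IsSymmAbout N g) (hS : ∀ j ≤ N, N - j ∈ S ↔ j ∈ S) :
    IsSymmAbout N (raiseOn S g) := fun j hj => by
  by_cases h : j ∈ S
  · rw [raiseOn_of_mem ((hS j hj).2 h), raiseOn_of_mem h, hg j hj]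
  · rw [raiseOn_of_notMem (mt (hS j hj).1 h), raiseOn_of_notMem h, hg j hj]

theorem raiseValleys_of_isValley (h : IsValley g i) : raiseValleys g i = g i + 2 :=
  raiseOn_of_mem h

theorem raiseValleys_of_not_isValley (h : ¬IsValley g i) : raiseValleys g i = g i :=
  raiseOn_of_notMem h

theorem IsValley.isPeak_raiseValleys (h : IsValley g i) : IsPeak (raiseValleys g) i := by
  obtain ⟨h0, hl, hr⟩ := h
  refine ⟨h0, ?_, ?_⟩ <;>
    simp only [raiseValleys_of_isValley ⟨h0, hl, hr⟩,
      raiseValleys_of_not_isValley (IsValley.not_pred ⟨h0, hl, hr⟩),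
      raiseValleys_of_not_isValley (IsValley.not_succ ⟨h0, hl, hr⟩)] <;> omega

theorem IsValley.of_raiseValleys (h : IsValley (raiseValleys g) i) :
    IsValley g (i - 1) ∨ IsValley g (i + 1) := by
  have hi : ¬IsValley g i := fun h' => h.not_isPeak h'.isPeak_raiseValleys
  by_contra! hne
  obtain ⟨h0, hl, hr⟩ := h
  rw [raiseValleys_of_not_isValley hne.1, raiseValleys_of_not_isValley hi] at hl
  rw [raiseValleys_of_not_isValley hne.2, raiseValleys_of_not_isValley hi] at hr
  exact hi ⟨h0, hl, hr⟩

theorem noFFRR_raiseValleys (hg : IsDyckHeight m g) : NoFFRR m (raiseValleys g) := by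
  refine (noFFRR_iff (isDyckHeight_raiseOn hg fun _ h => h)).2 fun j hj => ?_
  rcases hj.of_raiseValleys with h | h
  · exact .inl h.isPeak_raiseValleys
  · exact .inr h.isPeak_raiseValleys

theorem onlyEndpointsOnAxis_raiseValleys (hg : IsDyckHeight m g) :
    OnlyEndpointsOnAxis m (raiseValleys g) := by
  intro i h0 hi
  by_contra! hle
  have hgi : g i = 0 := le_antisymm ((le_raiseOn _ g i).trans hle) (hg.nonneg i)
  have hv : IsValley g i := by
    have := hg.step_pred h0 hi.le
    have := hg.step hi
    have := hg.nonneg (i - 1)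
    have := hg.nonneg (i + 1)
    exact ⟨h0, by omega, by omega⟩
  rw [raiseValleys_of_isValley hv] at hle
  omega

theorem lowerPeaks_of_isPeak (h : IsPeak f i) : lowerPeaks f i = f i - 2 := if_pos h

theorem lowerPeaks_of_not_isPeak (h : ¬IsPeak f i) : lowerPeaks f i = f i := if_neg h

theorem isDyckHeight_lowerPeaks (hf : IsDyckHeight m f) (hm : m ≠ 1)
    (hax : OnlyEndpointsOnAxis m f) : IsDyckHeight m (lowerPeaks f) := by
  refine ⟨?_, fun i hi => ?_, fun i => ?_, fun i hi => ?_⟩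
  · rw [lowerPeaks_of_not_isPeak fun h => h.1.false, hf.1]
  · rw [lowerPeaks_of_not_isPeak fun h => absurd (h.lt hf) (by omega), hf.eq_zero hi]
  · by_cases h : IsPeak f i
    · have := h.two_le hf hm hax
      rw [lowerPeaks_of_isPeak h]
      omega
    · rw [lowerPeaks_of_not_isPeak h]
      exact hf.nonneg i
  · have := hf.2.2.2 i hi
    by_cases h1 : IsPeak f i <;> by_cases h2 : IsPeak f (i + 1)
    · exact absurd h2 h1.not_succ
    · have := h1.2.2
      rw [lowerPeaks_of_isPeak h1, lowerPeaks_of_not_isPeak h2]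
      omega
    · have := h2.2.1
      rw [add_tsub_cancel_right] at this
      rw [lowerPeaks_of_not_isPeak h1, lowerPeaks_of_isPeak h2]
      omega
    · rwa [lowerPeaks_of_not_isPeak h1, lowerPeaks_of_not_isPeak h2]

theorem isSymmAbout_lowerPeaks (hf : IsSymmAbout N f)
    (hP : ∀ j ≤ N, IsPeak f (N - j) ↔ IsPeak f j) :
    IsSymmAbout N (lowerPeaks f) := fun j hj => by
  by_cases h : IsPeak f j
  · rw [lowerPeaks_of_isPeak ((hP j hj).2 h), lowerPeaks_of_isPeak h, hf j hj]
  · rw [lowerPeaks_of_not_isPeak (mt (hP j hj).1 h), lowerPeaks_of_not_isPeak h, hf j hj]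

theorem IsPeak.isValley_lowerPeaks (h : IsPeak f i) : IsValley (lowerPeaks f) i := by
  obtain ⟨h0, hl, hr⟩ := h
  refine ⟨h0, ?_, ?_⟩ <;>
    simp only [lowerPeaks_of_isPeak ⟨h0, hl, hr⟩,
      lowerPeaks_of_not_isPeak (IsPeak.not_pred ⟨h0, hl, hr⟩),
      lowerPeaks_of_not_isPeak (IsPeak.not_succ ⟨h0, hl, hr⟩)] <;> omega

theorem isValley_lowerPeaks_iff (hf : IsDyckHeight m f) (hno : NoFFRR m f) :
    IsValley (lowerPeaks f) i ↔ IsPeak f i := by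
  refine ⟨fun h => ?_, IsPeak.isValley_lowerPeaks⟩
  by_contra hi
  obtain ⟨h0, hl, hr⟩ := h
  rw [lowerPeaks_of_not_isPeak hi] at hl hr
  have hl' : ¬IsPeak f (i - 1) := fun hp => by
    have := hf.step_pred h0 (by have := hp.lt hf; omega)
    rw [lowerPeaks_of_isPeak hp] at hl
    omega
  have hr' : ¬IsPeak f (i + 1) := fun hp => by
    have := hf.step (i := i) (by have := hp.lt hf; omega)
    rw [lowerPeaks_of_isPeak hp] at hr
    omega
  rw [lowerPeaks_of_not_isPeak hl'] at hl
  rw [lowerPeaks_of_not_isPeak hr'] at hr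
  rcases (noFFRR_iff hf).1 hno i ⟨h0, hl, hr⟩ with h | h <;> contradiction

theorem raiseValleys_lowerPeaks (hf : IsDyckHeight m f) (hno : NoFFRR m f) :
    raiseValleys (lowerPeaks f) = f := funext fun i => by
  by_cases h : IsPeak f i
  · rw [raiseValleys_of_isValley h.isValley_lowerPeaks, lowerPeaks_of_isPeak h]
    omega
  · rw [raiseValleys_of_not_isValley ((isValley_lowerPeaks_iff hf hno).not.2 h),
      lowerPeaks_of_not_isPeak h]

end Raising

section LowestDifference

variable {m i : ℕ} {f g : ℕ → ℤ}

theorem IsDyckHeight.isValley_of_isMin (hg : IsDyckHeight m g) (hf : IsDyckHeight m f)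
    (hlt : g i < f i) (hmin : ∀ j, g j < f j → g i ≤ g j) :
    IsValley g i := by
  have h2 := hg.add_two_le_of_lt hf hlt
  have h0 : 0 < i := Nat.pos_of_ne_zero fun h => by
    subst h
    rw [hg.1, hf.1] at hlt
    exact hlt.false
  have hi : i < 2 * m := by
    by_contra
    rw [hg.eq_zero (by omega), hf.eq_zero (by omega)] at hlt
    exact hlt.false
  refine ⟨h0, ?_, ?_⟩
  · rcases hg.step_pred h0 hi.le with h | h
    · have := hf.step_pred h0 hi.le
      have := hmin (i - 1) (by omega)
      omega
    · exact h
  · rcases hg.step hi with h | h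
    · exact h
    · have := hf.step hi
      have := hmin (i + 1) (by omega)
      omega

theorem IsDyckHeight.exists_isValley_lt (hg : IsDyckHeight m g) (hf : IsDyckHeight m f)
    (hle : ∀ j, g j ≤ f j) (hne : g ≠ f) : ∃ i, IsValley g i ∧ g i < f i := by
  have hfin : {j | g j < f j}.Finite :=
    (Set.finite_Iic (2 * m)).subset fun j (hj : g j < f j) => by
      by_contra h
      rw [Set.mem_Iic, not_le] at h
      rw [hg.eq_zero h.le, hf.eq_zero h.le] at hj
      exact hj.false
  obtain ⟨j, hj⟩ := Function.ne_iff.1 hne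
  obtain ⟨i, hi, hmin⟩ := Set.exists_min_image _ g hfin ⟨j, (hle j).lt_of_ne hj⟩
  exact ⟨i, hg.isValley_of_isMin hf hi hmin, hi⟩

end LowestDifference

namespace SymDyckPath

variable {n : ℕ}

theorem isDyckHeight (μ : SymDyckPath n) : IsDyckHeight (2 * n) μ.1.1 := μ.1.2

theorem isSymmAbout (μ : SymDyckPath n) : IsSymmAbout (4 * n) μ.1.1 := μ.2

theorem le_iff {μ ν : SymDyckPath n} : μ ≤ ν ↔ ∀ i, μ.1.1 i ≤ ν.1.1 i := Iff.rfl

theorem ext {μ ν : SymDyckPath n} (h : ∀ i, μ.1.1 i = ν.1.1 i) : μ = ν :=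
  Subtype.ext (Subtype.ext (funext h))

theorem isValley_lt (ν : SymDyckPath n) {i : ℕ} (h : IsValley ν.1.1 i) : i < 4 * n := by
  have := h.lt ν.isDyckHeight
  omega

theorem isPeak_lt (μ : SymDyckPath n) {i : ℕ} (h : IsPeak μ.1.1 i) : i < 4 * n := by
  have := h.lt μ.isDyckHeight
  omega

theorem isValley_sub_iff (ν : SymDyckPath n) {i : ℕ} (hi : i ≤ 4 * n) :
    IsValley ν.1.1 (4 * n - i) ↔ IsValley ν.1.1 i := by
  refine ⟨fun h => ?_, fun h => h.mirror ν.isSymmAbout (ν.isValley_lt h)⟩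
  simpa [Nat.sub_sub_self hi] using h.mirror ν.isSymmAbout (ν.isValley_lt h)

theorem isPeak_sub_iff (μ : SymDyckPath n) {i : ℕ} (hi : i ≤ 4 * n) :
    IsPeak μ.1.1 (4 * n - i) ↔ IsPeak μ.1.1 i := by
  refine ⟨fun h => ?_, fun h => h.mirror μ.isSymmAbout (μ.isPeak_lt h)⟩
  simpa [Nat.sub_sub_self hi] using h.mirror μ.isSymmAbout (μ.isPeak_lt h)

noncomputable def raise (ν : SymDyckPath n) (S : Set ℕ) (hS : ∀ j ∈ S, IsValley ν.1.1 j)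
    (hsymm : ∀ j ≤ 4 * n, 4 * n - j ∈ S ↔ j ∈ S) : SymDyckPath n :=
  ⟨⟨raiseOn S ν.1.1, isDyckHeight_raiseOn ν.isDyckHeight hS⟩,
    isSymmAbout_raiseOn ν.isSymmAbout hsymm⟩

noncomputable def pop (ν : SymDyckPath n) : SymDyckPath n :=
  ν.raise {j | IsValley ν.1.1 j} (fun _ h => h) fun _ hj => ν.isValley_sub_iff hj

noncomputable def raiseAt (ν : SymDyckPath n) (i : ℕ) (hi : IsValley ν.1.1 i) :
    SymDyckPath n :=
  ν.raise {i, 4 * n - i}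
    (by
      rintro j (rfl | rfl)
      exacts [hi, (ν.isValley_sub_iff (ν.isValley_lt hi).le).2 hi])
    (fun j hj => by
      have := ν.isValley_lt hi
      simp only [Set.mem_insert_iff, Set.mem_singleton_iff]
      omega)

theorem raiseAt_apply_self (ν : SymDyckPath n) (i : ℕ) (hi : IsValley ν.1.1 i) :
    (ν.raiseAt i hi).1.1 i = ν.1.1 i + 2 :=
  raiseOn_of_mem (Set.mem_insert i _)

theorem lt_raiseAt (ν : SymDyckPath n) (i : ℕ) (hi : IsValley ν.1.1 i) : ν < ν.raiseAt i hi :=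
  lt_of_le_of_ne (le_iff.2 (le_raiseOn _ _)) fun h => by
    have := ν.raiseAt_apply_self i hi
    rw [← h] at this
    omega

theorem raiseAt_covBy (ν : SymDyckPath n) (i : ℕ) (hi : IsValley ν.1.1 i) :
    ν ⋖ ν.raiseAt i hi := by
  refine covBy_iff_lt_and_eq_or_eq.2 ⟨ν.lt_raiseAt i hi, fun c hνc hc => ?_⟩
  have hi4 := (ν.isValley_lt hi).le
  have hout : ∀ j ∉ ({i, 4 * n - i} : Set ℕ), c.1.1 j = ν.1.1 j := fun j hj =>
    le_antisymm ((le_iff.1 hc j).trans_eq (raiseOn_of_notMem hj)) (le_iff.1 hνc j)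
  have hc4 := c.isSymmAbout i hi4
  have hν4 := ν.isSymmAbout i hi4
  rcases (le_iff.1 hνc i).eq_or_lt with h | h
  · refine .inl (ext fun j => ?_)
    by_cases hj : j ∈ ({i, 4 * n - i} : Set ℕ)
    · rcases hj with rfl | rfl <;> omega
    · exact hout j hj
  · have h2 := ν.isDyckHeight.add_two_le_of_lt c.isDyckHeight h
    have h2' := (le_iff.1 hc i).trans_eq (ν.raiseAt_apply_self i hi)
    refine .inr (ext fun j => ?_)
    by_cases hj : j ∈ ({i, 4 * n - i} : Set ℕ)
    · show _ = raiseOn _ _ _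
      rw [raiseOn_of_mem hj]
      rcases hj with rfl | rfl <;> omega
    · exact (hout j hj).trans (raiseOn_of_notMem hj).symm

theorem exists_raiseAt_le {ν z : SymDyckPath n} (h : ν < z) :
    ∃ i, ∃ hi : IsValley ν.1.1 i, ν.raiseAt i hi ≤ z := by
  obtain ⟨i, hi, hlt⟩ := ν.isDyckHeight.exists_isValley_lt z.isDyckHeight (le_iff.1 h.le)
    fun he => h.ne (ext (congrFun he))
  have h2 := ν.isDyckHeight.add_two_le_of_lt z.isDyckHeight hlt
  have hi4 := (ν.isValley_lt hi).le
  have hz4 := z.isSymmAbout i hi4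
  have hν4 := ν.isSymmAbout i hi4
  refine ⟨i, hi, le_iff.2 fun j => ?_⟩
  by_cases hj : j ∈ ({i, 4 * n - i} : Set ℕ)
  · show raiseOn _ _ _ ≤ _
    rw [raiseOn_of_mem hj]
    rcases hj with rfl | rfl <;> omega
  · exact (raiseOn_of_notMem hj).trans_le (le_iff.1 h.le j)

theorem le_pop_of_covBy {ν z : SymDyckPath n} (h : ν ⋖ z) : z ≤ ν.pop := by
  obtain ⟨i, hi, hle⟩ := exists_raiseAt_le h.lt
  obtain rfl := hle.eq_of_not_lt (h.2 (ν.lt_raiseAt i hi))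
  refine le_iff.2 (raiseOn_mono ?_)
  rintro j (rfl | rfl)
  exacts [hi, (ν.isValley_sub_iff (ν.isValley_lt hi).le).2 hi]

theorem isLUB_pop (ν : SymDyckPath n) : IsLUB (insert ν {z | ν ⋖ z}) ν.pop := by
  refine ⟨?_, fun w hw => le_iff.2 fun j => ?_⟩
  · rintro z (rfl | hz)
    exacts [le_iff.2 (le_raiseOn _ _), le_pop_of_covBy hz]
  · by_cases hj : IsValley ν.1.1 j
    · have := le_iff.1 (hw (Or.inr (ν.raiseAt_covBy j hj))) j
      rwa [raiseAt_apply_self, ← raiseValleys_of_isValley hj] at this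
    · exact (raiseOn_of_notMem hj).trans_le (le_iff.1 (hw (Or.inl rfl)) j)

noncomputable def lowerPeaks (μ : SymDyckPath n) (hax : OnlyEndpointsOnAxis (2 * n) μ.1.1) :
    SymDyckPath n :=
  ⟨⟨_root_.lowerPeaks μ.1.1, isDyckHeight_lowerPeaks μ.isDyckHeight (by omega) hax⟩,
    isSymmAbout_lowerPeaks μ.isSymmAbout fun _ hj => μ.isPeak_sub_iff hj⟩

theorem pop_lowerPeaks (μ : SymDyckPath n) (hno : NoFFRR (2 * n) μ.1.1)
    (hax : OnlyEndpointsOnAxis (2 * n) μ.1.1) : (μ.lowerPeaks hax).pop = μ :=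
  ext fun i => congrFun (raiseValleys_lowerPeaks μ.isDyckHeight hno) i

end SymDyckPath

/-- A symmetric Dyck path `μ` of semilength `2n` lies in the image of the upward pop
operator `Pop^↑ (ν) = ν ⊔ ⋁{z : ν ⋖ z}` on `J(Φ⁺_{B_n})` if and only if `μ` has no
consecutive steps `ffrr` and touches the x-axis only at `(0,0)` and `(4n,0)`. -/
theorem stmt_11 (n : ℕ) (μ : SymDyckPath n) :
    (∃ ν : SymDyckPath n, IsLUB (insert ν {z | ν ⋖ z}) μ) ↔
      NoFFRR (2 * n) μ.val.val ∧ OnlyEndpointsOnAxis (2 * n) μ.val.val := by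
  constructor
  · rintro ⟨ν, hν⟩
    obtain rfl := hν.unique ν.isLUB_pop
    exact ⟨noFFRR_raiseValleys ν.isDyckHeight,
      onlyEndpointsOnAxis_raiseValleys ν.isDyckHeight⟩
  · rintro ⟨hno, hax⟩
    have := (μ.lowerPeaks hax).isLUB_pop
    rw [μ.pop_lowerPeaks hno hax] at this
    exact ⟨_, this⟩
end

section
/- In the formal power series ring Q[[x,y]], let L(x,y) = (1 − (2xy/(1−x))²)^(1/2), defined via the binomial series. Then 1/(1−x) + ((1+x)/(2x(1−x)))·(1/L(x,y) − 1) = ∑_{n≥0} ∑_{k≥0} binomial(n, k)·binomial(n+1−k, k)·x^n·y^(2k). -/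
/-!
Write `x = X 0`, `y = X 1`. For `G(t) = ∑ C(2k,k) tᵏ` the recurrence
`(k + 1) C(2k+2,k+1) = 2(2k + 1) C(2k,k)` makes the derivative of `(1 - 4t) G²` vanish, so
`(1 - 4t) G² = 1`. Substituting `t = (xy / (1 - x))²`, the series
`V = (1 - x)⁻¹ G(t) = ∑ C(2k,k) C(n,2k) xⁿ y^{2k}` satisfies `((1 - x)² - 4x²y²) V² = 1`, i.e.
`V = 1 / ((1 - x) L)`. The equation for `A` says `L (1 - x) (1 + 2xA) = 1 + x`, hence
`(1 + 2xA)² = ((1 + x) V)²`, and comparing constant terms `1 + 2xA = (1 + x) V`. Thus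
`2 [xⁿ y^{2k}] A = C(2k,k) (C(n+1,2k) + C(n,2k))`, which is `2 C(n,k) C(n+1-k,k)` by trinomial
revision and Pascal's rule, while odd powers of `y` do not occur in `V`.
-/

namespace Nat

theorem centralBinom_mul_choose_succ_add_choose (n k : ℕ) :
    k.centralBinom * ((n + 1).choose (2 * k) + n.choose (2 * k)) =
      2 * (n.choose k * (n + 1 - k).choose k) := by
  obtain _ | j := k
  · simp
  rcases le_or_gt n j with h | h
  · rw [choose_eq_zero_of_lt (by omega : n + 1 < 2 * (j + 1)),
      choose_eq_zero_of_lt (by omega : n < 2 * (j + 1)),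
      choose_eq_zero_of_lt (by omega : n < j + 1)]
    simp
  obtain ⟨r, rfl⟩ : ∃ r, n = j + 1 + r := ⟨n - (j + 1), by omega⟩
  have hsucc : (j + 1 + r + 1).choose (2 * (j + 1)) * (j + 1).centralBinom =
      (j + 1 + r + 1).choose (j + 1) * (r + 1).choose (j + 1) := by
    rw [centralBinom_eq_two_mul_choose, choose_mul (by omega)]
    congr 2 <;> omega
  have hself : (j + 1 + r).choose (2 * (j + 1)) * (j + 1).centralBinom =
      (j + 1 + r).choose (j + 1) * r.choose (j + 1) := by
    rw [centralBinom_eq_two_mul_choose, choose_mul (by omega)]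
    congr 2 <;> omega
  have htri : (j + 1 + r).choose j * (r + 1).choose (j + 1) =
      (j + 1 + r).choose (j + 1) * r.choose j := by
    have h1 : (j + 1 + r).choose (2 * j + 1) * (2 * j + 1).choose j =
        (j + 1 + r).choose j * (r + 1).choose (j + 1) := by
      rw [choose_mul (by omega)]
      congr 2 <;> omega
    have h2 : (j + 1 + r).choose (2 * j + 1) * (2 * j + 1).choose j =
        (j + 1 + r).choose (j + 1) * r.choose j := by
      rw [← choose_symm_half, choose_mul (by omega)]
      congr 2 <;> omega
    rw [← h1, h2]
  rw [show j + 1 + r + 1 - (j + 1) = r + 1 by omega]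
  linear_combination hsucc + hself + (r + 1).choose (j + 1) * choose_succ_succ' (j + 1 + r) j +
    htri + (j + 1 + r).choose (j + 1) * (choose_succ_succ' r j).symm

end Nat

namespace MvPowerSeries

def finTwoEquivOptionUnit : Fin 2 ≃ Option Unit where
  toFun := ![some (), none]
  invFun o := o.elim 1 fun _ => 0
  left_inv := by decide
  right_inv := by decide

variable (R : Type*) [CommSemiring R]

noncomputable def finTwoEquivPowerSeries :
    MvPowerSeries (Fin 2) R ≃ₐ[R] PowerSeries (PowerSeries R) :=
  (renameEquiv R finTwoEquivOptionUnit).trans (optionEquivLeft Unit R)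

variable {R}

theorem coeff_coeff_finTwoEquivPowerSeries (F : MvPowerSeries (Fin 2) R) (m n : ℕ) :
    PowerSeries.coeff n (PowerSeries.coeff m (finTwoEquivPowerSeries R F)) =
      coeff (Finsupp.single 0 n + Finsupp.single 1 m) F := by
  have he : (Finsupp.single () n).optionElim m = Finsupp.embDomain
      finTwoEquivOptionUnit.toEmbedding (Finsupp.single 0 n + Finsupp.single 1 m) := by
    ext (_ | _) <;> simp [finTwoEquivOptionUnit]
  rw [← PowerSeries.coeff_coeToMvPowerSeries, finTwoEquivPowerSeries, AlgEquiv.trans_apply,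
    coeff_coeff_optionEquivLeft, he]
  exact coeff_embDomain_rename _ _ _

@[simp]
theorem finTwoEquivPowerSeries_X_zero :
    finTwoEquivPowerSeries R (X 0) = PowerSeries.C PowerSeries.X := by
  change optionEquivLeft Unit R (rename finTwoEquivOptionUnit (X 0)) = _
  rw [rename_X]
  exact optionEquivLeft_X_some ()

@[simp]
theorem finTwoEquivPowerSeries_X_one : finTwoEquivPowerSeries R (X 1) = PowerSeries.X := by
  change optionEquivLeft Unit R (rename finTwoEquivOptionUnit (X 1)) = _
  rw [rename_X]
  exact optionEquivLeft_X_none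

end MvPowerSeries

namespace PowerSeries

section CentralBinom

variable {R : Type*} [CommRing R]

variable (R) in
noncomputable def centralBinomSeries : R⟦X⟧ := mk fun k => (k.centralBinom : R)

theorem one_sub_four_X_mul_derivative_centralBinomSeries :
    (1 - 4 * X) * d⁄dX R (centralBinomSeries R) = 2 * centralBinomSeries R := by
  rw [← map_ofNat C 4, ← map_ofNat C 2]
  ext (_ | k) <;>
    simp only [sub_mul, one_mul, mul_assoc, map_sub, coeff_C_mul, coeff_succ_X_mul,
      coeff_zero_X_mul, coeff_derivative, centralBinomSeries, coeff_mk]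
  · simp [Nat.centralBinom, Nat.choose]
  · have h := congrArg (Nat.cast : ℕ → R) (Nat.succ_mul_centralBinom_succ (k + 1))
    push_cast at h ⊢
    linear_combination h

theorem one_sub_four_X_mul_centralBinomSeries_sq :
    (1 - 4 * X) * centralBinomSeries R ^ 2 = 1 := by
  -- over `ℤ` a power series is determined by its derivative and constant coefficient
  have hℤ : (1 - 4 * X) * centralBinomSeries ℤ ^ 2 = 1 := by
    refine derivative.ext ?_ (by simp [centralBinomSeries])
    have hD : d⁄dX ℤ (1 - 4 * X) = -4 := by
      simpa using (d⁄dX ℤ).map_natCast 4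
    rw [Derivation.leibniz, derivative_pow, smul_eq_mul, smul_eq_mul, hD, derivative_one]
    linear_combination (2 * centralBinomSeries ℤ) *
      one_sub_four_X_mul_derivative_centralBinomSeries (R := ℤ)
  have hmap : map (Int.castRingHom R) (centralBinomSeries ℤ) = centralBinomSeries R := by
    ext; simp [centralBinomSeries]
  simpa [hmap, map_ofNat] using congrArg (map (Int.castRingHom R)) hℤ

theorem one_sub_four_mul_X_sq_mul_expand_rescale_centralBinomSeries_sq (a : R) :
    (1 - 4 * (C a * X ^ 2)) * expand 2 two_ne_zero (rescale a (centralBinomSeries R)) ^ 2 = 1 := by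
  have := congrArg (fun f => expand 2 two_ne_zero (rescale a f))
    (one_sub_four_X_mul_centralBinomSeries_sq (R := R))
  simpa only [map_mul, map_sub, map_one, map_pow, map_ofNat, rescale_X, expand_C, expand_X]
    using this

end CentralBinom

theorem coeff_X_pow_mul_mk_one_pow {S : Type*} [CommRing S] (j n : ℕ) :
    coeff n (X ^ j * (mk 1 : S⟦X⟧) ^ (j + 1)) = (n.choose j : S) := by
  have hpow : (mk 1 : S⟦X⟧) ^ (j + 1) = mk fun n => ((j + n).choose j : S) :=
    left_inv_eq_right_inv (by rw [← mul_pow, mk_one_mul_one_sub_eq_one, one_pow])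
      ((mul_comm _ _).trans (mk_add_choose_mul_one_sub_pow_eq_one S j))
  rw [hpow, coeff_X_pow_mul', coeff_mk]
  split_ifs with h
  · rw [Nat.add_sub_cancel' h]
  · rw [Nat.choose_eq_zero_of_lt (not_le.mp h), Nat.cast_zero]

theorem two_mul_coeff_coeff_of_one_add_two_C_X_mul_eq {S : Type*} [CommRing S]
    {A V : S⟦X⟧⟦X⟧} (h : 1 + 2 * C X * A = (1 + C X) * V) (m n : ℕ) :
    2 * coeff n (coeff m A) = coeff (n + 1) (coeff m V) + coeff n (coeff m V) := by
  have := congrArg (fun f => coeff (n + 1) (coeff m f)) h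
  simp only [two_mul, add_mul, one_mul, map_add, coeff_C_mul, coeff_succ_X_mul, coeff_one,
    apply_ite (coeff (n + 1)), map_zero, Nat.add_one_ne_zero, if_false, ite_self, zero_add] at this
  linear_combination this

section InvSqrt

variable (S : Type*) [CommRing S]

/-- `1 / ((1 - x) L)` in `S⟦x⟧⟦y⟧`. Here `mk 1 = (1 - x)⁻¹`, and `t = (xy / (1 - x))²` is
substituted by rescaling `t` by `(x / (1 - x))²`, then expanding `t = y²`. -/
noncomputable def invSqrtSeries : S⟦X⟧⟦X⟧ :=
  C (mk 1) * expand 2 two_ne_zero (rescale ((X * mk 1) ^ 2) (centralBinomSeries S⟦X⟧))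

theorem invSqrtSeries_sq_mul :
    ((1 - C X) ^ 2 - (2 * C X * X) ^ 2) * invSqrtSeries S ^ 2 = 1 := by
  have hE := one_sub_four_mul_X_sq_mul_expand_rescale_centralBinomSeries_sq
    ((X * mk 1 : S⟦X⟧) ^ 2)
  have hg : C (mk 1) * (1 - C X) = (1 : S⟦X⟧⟦X⟧) := by
    rw [← map_one C, ← map_sub, ← map_mul, mk_one_mul_one_sub_eq_one]
  rw [invSqrtSeries]
  simp only [map_mul, map_pow] at hE
  linear_combination (C (mk 1) * (1 - C X) + 1) *
    expand 2 two_ne_zero (rescale ((X * mk 1) ^ 2) (centralBinomSeries S⟦X⟧)) ^ 2 * hg + hE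

variable {S}

theorem coeff_coeff_two_mul_invSqrtSeries (n k : ℕ) :
    coeff n (coeff (2 * k) (invSqrtSeries S)) = k.centralBinom * n.choose (2 * k) := by
  rw [invSqrtSeries, coeff_C_mul, coeff_expand_mul, coeff_rescale, centralBinomSeries, coeff_mk,
    ← coeff_X_pow_mul_mk_one_pow, ← map_natCast C, ← coeff_C_mul, map_natCast]
  congr 1
  ring

theorem coeff_two_mul_add_one_invSqrtSeries (k : ℕ) :
    coeff (2 * k + 1) (invSqrtSeries S) = 0 := by
  rw [invSqrtSeries, coeff_C_mul, coeff_expand_of_not_dvd _ _ _ (by omega), mul_zero]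

theorem constantCoeff_constantCoeff_invSqrtSeries :
    constantCoeff (constantCoeff (invSqrtSeries S)) = 1 := by
  simpa using coeff_coeff_two_mul_invSqrtSeries (S := S) 0 0

theorem one_add_two_C_X_mul_eq_one_add_C_X_mul_invSqrtSeries [IsDomain S] [NeZero (2 : S)]
    {L A : S⟦X⟧⟦X⟧} (hL : L ^ 2 * (1 - C X) ^ 2 = (1 - C X) ^ 2 - (2 * C X * X) ^ 2)
    (hA : 2 * C X * (1 - C X) * L * A = 2 * C X * L + (1 + C X) * (1 - L)) :
    1 + 2 * C X * A = (1 + C X) * invSqrtSeries S := by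
  have hLA : L * (1 - C X) * (1 + 2 * C X * A) = 1 + C X := by linear_combination hA
  -- both sides are `(1 + x)² / ((1 - x)² - 4x²y²)`
  have hsq : (1 + 2 * C X * A) ^ 2 = ((1 + C X) * invSqrtSeries S) ^ 2 := by
    linear_combination (-(1 + 2 * C X * A) ^ 2) * invSqrtSeries_sq_mul S + invSqrtSeries S ^ 2 *
      (-(1 + 2 * C X * A) ^ 2 * hL + (L * (1 - C X) * (1 + 2 * C X * A) + 1 + C X) * hLA)
  refine (sq_eq_sq_iff_eq_or_eq_neg.mp hsq).resolve_right fun h => two_ne_zero (α := S) ?_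
  have h0 : (1 : S) = -1 := by
    simpa [constantCoeff_constantCoeff_invSqrtSeries] using
      congrArg (fun f => constantCoeff (constantCoeff f)) h
  linear_combination h0

end InvSqrt

end PowerSeries

theorem stmt_17_general (L A : MvPowerSeries (Fin 2) ℚ)
    (hL : L ^ 2 * (1 - MvPowerSeries.X (0 : Fin 2)) ^ 2 =
      (1 - MvPowerSeries.X (0 : Fin 2)) ^ 2 -
        (2 * MvPowerSeries.X 0 * MvPowerSeries.X 1) ^ 2)
    (hA : 2 * MvPowerSeries.X (0 : Fin 2) * (1 - MvPowerSeries.X 0) * L * A =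
      2 * MvPowerSeries.X 0 * L + (1 + MvPowerSeries.X 0) * (1 - L)) :
    ∀ n k : ℕ,
      MvPowerSeries.coeff (Finsupp.single 0 n + Finsupp.single 1 (2 * k)) A =
        (n.choose k : ℚ) * ((n + 1 - k).choose k : ℚ) ∧
      MvPowerSeries.coeff (Finsupp.single 0 n + Finsupp.single 1 (2 * k + 1)) A = 0 := by
  have hL' := congrArg (MvPowerSeries.finTwoEquivPowerSeries ℚ) hL
  have hA' := congrArg (MvPowerSeries.finTwoEquivPowerSeries ℚ) hA
  simp only [map_mul, map_sub, map_add, map_pow, map_one, map_ofNat,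
    MvPowerSeries.finTwoEquivPowerSeries_X_zero,
    MvPowerSeries.finTwoEquivPowerSeries_X_one] at hL' hA'
  have hcoeff := PowerSeries.two_mul_coeff_coeff_of_one_add_two_C_X_mul_eq
    (PowerSeries.one_add_two_C_X_mul_eq_one_add_C_X_mul_invSqrtSeries hL' hA')
  intro n k
  simp only [← MvPowerSeries.coeff_coeff_finTwoEquivPowerSeries]
  constructor
  · have h := hcoeff (2 * k) n
    have hbinom := congrArg (Nat.cast : ℕ → ℚ) (Nat.centralBinom_mul_choose_succ_add_choose n k)
    rw [PowerSeries.coeff_coeff_two_mul_invSqrtSeries,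
      PowerSeries.coeff_coeff_two_mul_invSqrtSeries] at h
    push_cast at hbinom
    linear_combination h / 2 + hbinom / 2
  · have h := hcoeff (2 * k + 1) n
    rw [PowerSeries.coeff_two_mul_add_one_invSqrtSeries, map_zero, map_zero, add_zero] at h
    linear_combination h / 2

/-- In `ℚ[[x,y]]`, let `L(x,y) = (1 − (2xy/(1−x))²)^{1/2}` (the branch with constant
term `1` given by the binomial series, characterized by `L²(1−x)² = (1−x)² − (2xy)²`).
Then `1/(1−x) + ((1+x)/(2x(1−x)))(1/L − 1) = ∑_{n,k} C(n,k)C(n+1−k,k) xⁿ y^{2k}`;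
the equation defining the left-hand side `A` is stated with denominators cleared as
`2x(1−x)L·A = 2xL + (1+x)(1−L)`, which determines `A` uniquely. -/
theorem stmt_17 (L A : MvPowerSeries (Fin 2) ℚ)
    (hL : L ^ 2 * (1 - MvPowerSeries.X (0 : Fin 2)) ^ 2 =
      (1 - MvPowerSeries.X (0 : Fin 2)) ^ 2 -
        (2 * MvPowerSeries.X 0 * MvPowerSeries.X 1) ^ 2)
    (hL0 : MvPowerSeries.constantCoeff L = 1)
    (hA : 2 * MvPowerSeries.X (0 : Fin 2) * (1 - MvPowerSeries.X 0) * L * A =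
      2 * MvPowerSeries.X 0 * L + (1 + MvPowerSeries.X 0) * (1 - L)) :
    ∀ n k : ℕ,
      MvPowerSeries.coeff (Finsupp.single 0 n + Finsupp.single 1 (2 * k)) A =
        (n.choose k : ℚ) * ((n + 1 - k).choose k : ℚ) ∧
      MvPowerSeries.coeff (Finsupp.single 0 n + Finsupp.single 1 (2 * k + 1)) A = 0 :=
  stmt_17_general L A hL hA
end
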